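/- Let I = [−1/2,1/2], Q = I × I, and let F : Q → Q be a Borel map of the form F(x,y) = (T(x), G(x,y)). Let μ be an F-invariant Borel probability measure on Q whose marginal μ_T on the first coordinate is T-invariant and absolutely continuous with respect to Lebesgue measure m on I. Fix α ∈ (0,1]. Assume: (1) there exist C₀ > 0 and Λ₀ ∈ (0,1) such that for every f ∈ BV_{1,α}, every bounded measurable g : I → ℝ and every n ≥ 1, | ∫ f·(g∘Tⁿ) dm − (∫ g dμ_T)(∫ f dm) | ≤ C₀ Λ₀ⁿ ‖g‖_∞ ‖f‖_{1,α}; (2) T is nonsingular with respect to m, and there is a finite collection of intervals I₁,…,I_m with ∪I_i = I such that T restricted to each I_i is a homeomorphism onto its image; (3) there is λ < 1 such that |G(x,y₁) − G(x,y₂)| ≤ λ|y₁ − y₂| for all x, y₁, y₂ ∈ I. Then there exist C > 0 and Λ ∈ (0,1) such that for every integrable f : Q → ℝ with f ≥ 0, every g : Q → ℝ with ‖g‖_{y-Lip} < ∞, and every n ≥ 1: | ∫_Q f·(g∘Fⁿ) dm₂ − (∫ g dμ)(∫ f dm₂) | ≤ C Λⁿ ‖g‖_{y-Lip} ( ‖π(f)‖_{1,α}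 + ‖f‖_{L¹(m₂)} ), where m₂ is two-dimensional Lebesgue measure on Q. -/

import Mathlib

open MeasureTheory Set Filter Metric
open scoped ENNReal

noncomputable section

/-- The interval `I = [−1/2, 1/2]`. -/
def J : Set ℝ := Set.Icc (-(1/2) : ℝ) (1/2)

/-- The square `Q = I × I`. -/
def Sq : Set (ℝ × ℝ) := J ×ˢ J

/-- The essential oscillation of `h` over the `ε`-ball around `x`, intersected with `I`. -/
def osc (h : ℝ → ℝ) (ε x : ℝ) : ℝ≥0∞ :=
  essSup (fun q : ℝ × ℝ => ENNReal.ofReal |h q.1 - h q.2|)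
    ((volume.restrict (Metric.ball x ε ∩ J)).prod (volume.restrict (Metric.ball x ε ∩ J)))

/-- `osc_1(h,ε) = ∫_I osc(h,ε,x) dm(x)`. -/
def osc1 (h : ℝ → ℝ) (ε : ℝ) : ℝ≥0∞ := ∫⁻ x in J, osc h ε x

/-- `Var_{1,r}(h) = sup_{0 < ε ≤ 1} ε^{−r} osc_1(h,ε)` (cutoff `A = 1`). -/
def Var1 (r : ℝ) (h : ℝ → ℝ) : ℝ≥0∞ :=
  ⨆ ε ∈ Set.Ioc (0 : ℝ) 1, ENNReal.ofReal (ε ^ (-r)) * osc1 h ε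

/-- `‖h‖_{1,r} = Var_{1,r}(h) + ‖h‖_{L¹(m)}` (valued in `[0,∞]`). -/
def norm1E (r : ℝ) (h : ℝ → ℝ) : ℝ≥0∞ := Var1 r h + ∫⁻ x in J, ENNReal.ofReal |h x|

/-- `π(f)(x) = ∫_I f(x,t) dt`. -/
def piF (f : ℝ × ℝ → ℝ) : ℝ → ℝ := fun x => ∫ t in J, f (x, t)

/-- `‖g‖_sup = sup_{Q} |g|` (valued in `[0,∞]`). -/
def supQ (g : ℝ × ℝ → ℝ) : ℝ≥0∞ := ⨆ p ∈ Sq, ENNReal.ofReal |g p|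

/-- `Lip_y(g) = sup_{x, y₁ ≠ y₂} |g(x,y₂) − g(x,y₁)| / |y₂ − y₁|` (valued in `[0,∞]`). -/
def lipY (g : ℝ × ℝ → ℝ) : ℝ≥0∞ :=
  ⨆ x ∈ J, ⨆ y₁ ∈ J, ⨆ y₂ ∈ J,
    ENNReal.ofReal |g (x, y₁) - g (x, y₂)| / ENNReal.ofReal |y₁ - y₂|

/-- `‖g‖_{y-Lip} = ‖g‖_sup + Lip_y(g)`. -/
def yLipNorm (g : ℝ × ℝ → ℝ) : ℝ≥0∞ := supQ g + lipY g

/-! Split `n = m + m'` with `m ≈ n / 2`. Contraction along the fibres makes `g ∘ Fᵐ` depend on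
the vertical coordinate only up to `Lip_y(g) λᵐ`, so it may be replaced by the observable
`x ↦ g (Fᵐ (x, 0))` of the base, both in the correlation integral and in the `μ`-average.
Integrating out the vertical coordinate then turns the correlation into one of `π(f)` with an
observable composed with `T^{m'}`, which decays exponentially by the hypothesis on the base. -/

theorem measurableSet_J : MeasurableSet J := measurableSet_Icc

theorem measurableSet_Sq : MeasurableSet Sq := measurableSet_J.prod measurableSet_J

theorem zero_mem_J : (0 : ℝ) ∈ J := by constructor <;> norm_num

theorem abs_le_one_of_mem_J {y : ℝ} (hy : y ∈ J) : |y| ≤ 1 := by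
  rw [abs_le]; constructor <;> linarith [hy.1, hy.2]

theorem ae_mem_Sq_of_measure_eq_one {μ : Measure (ℝ × ℝ)} [IsProbabilityMeasure μ]
    (hμQ : μ Sq = 1) : ∀ᵐ p ∂μ, p ∈ Sq :=
  (ae_mem_iff_measure_eq measurableSet_Sq.nullMeasurableSet).2 (by rw [hμQ, measure_univ])

theorem volume_restrict_Sq :
    (volume : Measure (ℝ × ℝ)).restrict Sq = (volume.restrict J).prod (volume.restrict J) := by
  rw [Measure.prod_restrict, ← Measure.volume_eq_prod]; rfl

theorem pow_le_two_mul_pow {a Λ : ℝ} (ha : 0 ≤ a) (haΛ : a ≤ Λ ^ 2) (hΛ : 1 / 2 ≤ Λ)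
    (hΛ1 : Λ ≤ 1) {k n : ℕ} (hn : n ≤ 2 * k + 1) : a ^ k ≤ 2 * Λ ^ n :=
  calc a ^ k ≤ (Λ ^ 2) ^ k := pow_le_pow_left₀ ha haΛ k
    _ = 2 * (1 / 2) * Λ ^ (2 * k) := by ring
    _ ≤ 2 * Λ * Λ ^ (2 * k) := by gcongr
    _ = 2 * Λ ^ (2 * k + 1) := by ring
    _ ≤ 2 * Λ ^ n := by
      gcongr 2 * ?_
      exact pow_le_pow_of_le_one (by linarith) hΛ1 hn

theorem exists_half_le_lt_one_le_sq {a b : ℝ} (ha : a < 1) (hb : b < 1) :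
    ∃ Λ : ℝ, 1 / 2 ≤ Λ ∧ Λ < 1 ∧ a ≤ Λ ^ 2 ∧ b ≤ Λ ^ 2 := by
  set c := max (max a b) (1 / 4)
  have hc : 1 / 4 ≤ c := le_max_right _ _
  have hsq : √c ^ 2 = c := Real.sq_sqrt (by linarith)
  refine ⟨√c, ?_, ?_, ?_, ?_⟩
  · rw [Real.le_sqrt (by norm_num) (by linarith)]; linarith
  · rw [Real.sqrt_lt' one_pos]; simp only [c, one_pow, max_lt_iff]; norm_num [ha, hb]
  · rw [hsq]; exact (le_max_left a b).trans (le_max_left _ _)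
  · rw [hsq]; exact (le_max_right a b).trans (le_max_left _ _)

theorem abs_le_toReal_supQ {g : ℝ × ℝ → ℝ} (hS : supQ g ≠ ⊤) {p : ℝ × ℝ} (hp : p ∈ Sq) :
    |g p| ≤ (supQ g).toReal :=
  (ENNReal.ofReal_le_iff_le_toReal hS).mp
    (le_iSup₂_of_le (f := fun p _ => ENNReal.ofReal |g p|) p hp le_rfl)

theorem abs_sub_le_toReal_lipY {g : ℝ × ℝ → ℝ} (hL : lipY g ≠ ⊤) {x y₁ y₂ : ℝ}
    (hx : x ∈ J) (hy₁ : y₁ ∈ J) (hy₂ : y₂ ∈ J) :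
    |g (x, y₁) - g (x, y₂)| ≤ (lipY g).toReal * |y₁ - y₂| := by
  rcases eq_or_ne y₁ y₂ with rfl | hne
  · simp
  have hquot : ENNReal.ofReal |g (x, y₁) - g (x, y₂)| / ENNReal.ofReal |y₁ - y₂| ≤ lipY g :=
    le_iSup₂_of_le x hx <| le_iSup₂_of_le y₁ hy₁ <| le_iSup₂_of_le
      (f := fun y₂ _ => ENNReal.ofReal |g (x, y₁) - g (x, y₂)| / ENNReal.ofReal |y₁ - y₂|)
      y₂ hy₂ le_rfl
  rw [ENNReal.div_le_iff (by simpa [sub_eq_zero] using hne) ENNReal.ofReal_ne_top,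
    ← ENNReal.ofReal_toReal hL, ← ENNReal.ofReal_mul ENNReal.toReal_nonneg,
    ENNReal.ofReal_le_ofReal_iff (by positivity)] at hquot
  exact hquot

def BaseCorrelationDecay (T : ℝ → ℝ) (ν : Measure ℝ) (α C₀ Λ₀ : ℝ) : Prop :=
  ∀ f g : ℝ → ℝ, ∀ Kg : ℝ, Measurable f → Var1 α f < ⊤ → Measurable g → (∀ x, |g x| ≤ Kg) →
    ∀ n : ℕ, 1 ≤ n →
      ENNReal.ofReal |(∫ x in J, f x * g (T^[n] x)) - (∫ x, g x ∂ν) * ∫ x in J, f x|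
        ≤ ENNReal.ofReal (C₀ * Λ₀ ^ n * Kg) * norm1E α f

theorem BaseCorrelationDecay.abs_le {T : ℝ → ℝ} {ν : Measure ℝ} {α C₀ Λ₀ : ℝ}
    (hbase : BaseCorrelationDecay T ν α C₀ Λ₀) (hC₀ : 0 ≤ C₀) (hΛ₀ : 0 ≤ Λ₀) {φ h : ℝ → ℝ}
    {K : ℝ} (hφ : Measurable φ) (hN : norm1E α φ ≠ ⊤) (hh : Measurable h)
    (hK : ∀ x, |h x| ≤ K) {n : ℕ} (hn : 1 ≤ n) :
    |(∫ x in J, φ x * h (T^[n] x)) - (∫ x, h x ∂ν) * ∫ x in J, φ x|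
      ≤ C₀ * Λ₀ ^ n * K * (norm1E α φ).toReal := by
  have hK0 : 0 ≤ K := (abs_nonneg _).trans (hK 0)
  have hdecay := hbase φ h K hφ (le_self_add.trans_lt hN.lt_top) hh hK n hn
  rwa [ENNReal.ofReal_le_iff_le_toReal (ENNReal.mul_ne_top ENNReal.ofReal_ne_top hN),
    ENNReal.toReal_mul, ENNReal.toReal_ofReal (by positivity)] at hdecay

section SkewProduct

variable {T : ℝ → ℝ} {G : ℝ × ℝ → ℝ} {F : ℝ × ℝ → ℝ × ℝ} {κ : ℝ} {g : ℝ × ℝ → ℝ}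

theorem iterate_fst_of_skew (hF : ∀ p, F p = (T p.1, G p)) (n : ℕ) (p : ℝ × ℝ) :
    (F^[n] p).1 = T^[n] p.1 := by
  induction n with
  | zero => rfl
  | succ n ih => rw [Function.iterate_succ_apply', Function.iterate_succ_apply', hF, ih]

theorem measurable_of_skew (hF : ∀ p, F p = (T p.1, G p)) (hFmeas : Measurable F) :
    Measurable T := by
  have hT : T = fun x => (F (x, 0)).1 := funext fun x => by rw [hF]
  rw [hT]
  fun_prop

theorem mapsTo_J_of_skew (hF : ∀ p, F p = (T p.1, G p)) (hFQ : MapsTo F Sq Sq) :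
    MapsTo T J J := fun x hx => by
  simpa [hF] using (hFQ (show (x, (0 : ℝ)) ∈ Sq from ⟨hx, zero_mem_J⟩)).1

theorem abs_snd_iterate_sub_le (hF : ∀ p, F p = (T p.1, G p)) (hFQ : MapsTo F Sq Sq)
    (hκ : 0 ≤ κ)
    (hG : ∀ x ∈ J, ∀ y₁ ∈ J, ∀ y₂ ∈ J, |G (x, y₁) - G (x, y₂)| ≤ κ * |y₁ - y₂|)
    (n : ℕ) {x y₁ y₂ : ℝ} (hx : x ∈ J) (hy₁ : y₁ ∈ J) (hy₂ : y₂ ∈ J) :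
    |(F^[n] (x, y₁)).2 - (F^[n] (x, y₂)).2| ≤ κ ^ n * |y₁ - y₂| := by
  induction n generalizing x y₁ y₂ with
  | zero => simp
  | succ n ih =>
    have hGmem : ∀ y ∈ J, G (x, y) ∈ J := fun y hy => by
      simpa [hF] using (hFQ (show (x, y) ∈ Sq from ⟨hx, hy⟩)).2
    rw [Function.iterate_succ_apply, Function.iterate_succ_apply, hF, hF]
    calc _ ≤ κ ^ n * |G (x, y₁) - G (x, y₂)| :=
          ih (mapsTo_J_of_skew hF hFQ hx) (hGmem y₁ hy₁) (hGmem y₂ hy₂)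
      _ ≤ κ ^ n * (κ * |y₁ - y₂|) := by gcongr; exact hG x hx y₁ hy₁ y₂ hy₂
      _ = κ ^ (n + 1) * |y₁ - y₂| := by ring

theorem abs_comp_iterate_sub_le (hF : ∀ p, F p = (T p.1, G p)) (hFQ : MapsTo F Sq Sq)
    (hκ : 0 ≤ κ)
    (hG : ∀ x ∈ J, ∀ y₁ ∈ J, ∀ y₂ ∈ J, |G (x, y₁) - G (x, y₂)| ≤ κ * |y₁ - y₂|)
    (hL : lipY g ≠ ⊤) (n : ℕ) {x y₁ y₂ : ℝ} (hx : x ∈ J) (hy₁ : y₁ ∈ J) (hy₂ : y₂ ∈ J) :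
    |g (F^[n] (x, y₁)) - g (F^[n] (x, y₂))| ≤ (lipY g).toReal * (κ ^ n * |y₁ - y₂|) := by
  set q₁ := F^[n] (x, y₁)
  set q₂ := F^[n] (x, y₂)
  have hq₁ : q₁ ∈ Sq := hFQ.iterate n ⟨hx, hy₁⟩
  have hq₂ : q₂ ∈ Sq := hFQ.iterate n ⟨hx, hy₂⟩
  have hfst : q₂ = (q₁.1, q₂.2) := by
    ext
    · simp only [q₁, q₂, iterate_fst_of_skew hF]
    · rfl
  calc |g q₁ - g q₂| = |g (q₁.1, q₁.2) - g (q₁.1, q₂.2)| := by rw [← hfst]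
    _ ≤ (lipY g).toReal * |q₁.2 - q₂.2| := abs_sub_le_toReal_lipY hL hq₁.1 hq₁.2 hq₂.2
    _ ≤ (lipY g).toReal * (κ ^ n * |y₁ - y₂|) := by
        gcongr; exact abs_snd_iterate_sub_le hF hFQ hκ hG n hx hy₁ hy₂

end SkewProduct

section BaseObservable

variable {T : ℝ → ℝ} {G : ℝ × ℝ → ℝ} {F : ℝ × ℝ → ℝ × ℝ} {κ : ℝ} {g : ℝ × ℝ → ℝ} {m : ℕ}

-- Clamping into `I` makes this bounded on all of `ℝ`, as `BaseCorrelationDecay` requires.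
def baseObservable (F : ℝ × ℝ → ℝ × ℝ) (g : ℝ × ℝ → ℝ) (m : ℕ) (x : ℝ) : ℝ :=
  g (F^[m] ((projIcc (-(1 / 2)) (1 / 2) (by norm_num) x : ℝ), 0))

theorem baseObservable_of_mem {x : ℝ} (hx : x ∈ J) :
    baseObservable F g m x = g (F^[m] (x, 0)) := by
  rw [baseObservable, projIcc_of_mem _ hx]

theorem measurable_baseObservable (hFmeas : Measurable F) (hg : Measurable g) :
    Measurable (baseObservable F g m) :=
  hg.comp <| (hFmeas.iterate m).comp <|
    (continuous_subtype_val.comp continuous_projIcc).measurable.prodMk measurable_const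

theorem abs_baseObservable_le (hFQ : MapsTo F Sq Sq) (hS : supQ g ≠ ⊤) (x : ℝ) :
    |baseObservable F g m x| ≤ (supQ g).toReal :=
  abs_le_toReal_supQ hS (hFQ.iterate m ⟨Subtype.prop _, zero_mem_J⟩)

theorem abs_comp_iterate_sub_baseObservable_le (hF : ∀ p, F p = (T p.1, G p))
    (hFQ : MapsTo F Sq Sq) (hκ : 0 ≤ κ)
    (hG : ∀ x ∈ J, ∀ y₁ ∈ J, ∀ y₂ ∈ J, |G (x, y₁) - G (x, y₂)| ≤ κ * |y₁ - y₂|)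
    (hL : lipY g ≠ ⊤) {p : ℝ × ℝ} (hp : p ∈ Sq) :
    |g (F^[m] p) - baseObservable F g m p.1| ≤ (lipY g).toReal * κ ^ m := by
  rw [baseObservable_of_mem hp.1]
  calc |g (F^[m] (p.1, p.2)) - g (F^[m] (p.1, 0))|
      ≤ (lipY g).toReal * (κ ^ m * |p.2 - 0|) :=
        abs_comp_iterate_sub_le hF hFQ hκ hG hL m hp.1 hp.2 zero_mem_J
    _ ≤ (lipY g).toReal * (κ ^ m * 1) := by
        gcongr; rw [sub_zero]; exact abs_le_one_of_mem_J hp.2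
    _ = (lipY g).toReal * κ ^ m := by rw [mul_one]

end BaseObservable

theorem abs_integral_mul_sub_integral_mul_le {X : Type*} [MeasurableSpace X] {μ : Measure X}
    {f u v : X → ℝ} {ε : ℝ} (hf : Integrable f μ) (hfu : Integrable (fun a => f a * u a) μ)
    (hfv : Integrable (fun a => f a * v a) μ) (hf0 : ∀ᵐ a ∂μ, 0 ≤ f a)
    (huv : ∀ᵐ a ∂μ, |u a - v a| ≤ ε) :
    |∫ a, f a * u a ∂μ - ∫ a, f a * v a ∂μ| ≤ ε * ∫ a, f a ∂μ := by
  rw [← integral_sub hfu hfv, ← integral_const_mul]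
  refine abs_integral_le_integral_abs.trans <|
    integral_mono_ae (hfu.sub hfv).abs (hf.const_mul ε) ?_
  filter_upwards [hf0, huv] with a ha hauv
  rw [← mul_sub, abs_mul, abs_of_nonneg ha, mul_comm]
  exact mul_le_mul_of_nonneg_right hauv ha

theorem integrableOn_mul_of_abs_le {X : Type*} [MeasurableSpace X] {μ : Measure X} {s : Set X}
    {f h : X → ℝ} {c : ℝ} (hf : IntegrableOn f s μ) (hs : MeasurableSet s) (hh : Measurable h)
    (hbdd : ∀ a ∈ s, |h a| ≤ c) : IntegrableOn (fun a => f a * h a) s μ :=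
  Integrable.mul_bdd hf hh.aestronglyMeasurable (ae_restrict_of_forall_mem hs hbdd)

theorem measurable_piF {f : ℝ × ℝ → ℝ} (hf : Measurable f) : Measurable (piF f) :=
  (StronglyMeasurable.integral_prod_right (ν := volume.restrict J) (f := fun x y => f (x, y))
    hf.stronglyMeasurable).measurable

theorem setIntegral_Sq_mul_comp_fst {f : ℝ × ℝ → ℝ} {h : ℝ → ℝ}
    (hint : IntegrableOn (fun p => f p * h p.1) Sq) :
    ∫ p in Sq, f p * h p.1 = ∫ x in J, piF f x * h x := by
  rw [IntegrableOn, volume_restrict_Sq] at hint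
  rw [volume_restrict_Sq, integral_prod _ hint]
  simp only [piF, integral_mul_const]

theorem setIntegral_Sq_eq_integral_piF {f : ℝ × ℝ → ℝ} (hf : IntegrableOn f Sq) :
    ∫ p in Sq, f p = ∫ x in J, piF f x := by
  rw [IntegrableOn, volume_restrict_Sq] at hf
  rw [volume_restrict_Sq, integral_prod _ hf]
  rfl

theorem ofReal_le_ofReal_mul_mul_of_le {x c : ℝ} {a b : ℝ≥0∞} (hc : 0 ≤ c) (ha : a ≠ ⊤)
    (hb : b ≠ ⊤) (h : x ≤ c * a.toReal * b.toReal) :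
    ENNReal.ofReal x ≤ ENNReal.ofReal c * a * b := by
  rw [← ENNReal.ofReal_toReal ha, ← ENNReal.ofReal_toReal hb, ← ENNReal.ofReal_mul hc,
    ← ENNReal.ofReal_mul (by positivity)]
  exact ENNReal.ofReal_le_ofReal h

section Correlation

variable {T : ℝ → ℝ} {G : ℝ × ℝ → ℝ} {F : ℝ × ℝ → ℝ × ℝ} {κ : ℝ} {f g : ℝ × ℝ → ℝ}
  {μ : Measure (ℝ × ℝ)} [IsProbabilityMeasure μ] {α C₀ Λ₀ : ℝ}

theorem abs_setIntegral_mul_comp_iterate_sub_baseObservable_le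
    (hF : ∀ p, F p = (T p.1, G p)) (hFQ : MapsTo F Sq Sq) (hFmeas : Measurable F) (hκ : 0 ≤ κ)
    (hG : ∀ x ∈ J, ∀ y₁ ∈ J, ∀ y₂ ∈ J, |G (x, y₁) - G (x, y₂)| ≤ κ * |y₁ - y₂|)
    (hfint : IntegrableOn f Sq) (hf0 : ∀ p, 0 ≤ f p) (hg : Measurable g) (hS : supQ g ≠ ⊤)
    (hL : lipY g ≠ ⊤) (m m' : ℕ) :
    |(∫ p in Sq, f p * g (F^[m + m'] p)) - ∫ p in Sq, f p * baseObservable F g m (T^[m'] p.1)|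
      ≤ (lipY g).toReal * κ ^ m * ∫ p in Sq, f p := by
  have hT := measurable_of_skew hF hFmeas
  refine abs_integral_mul_sub_integral_mul_le (u := fun p => g (F^[m + m'] p))
    (v := fun p => baseObservable F g m (T^[m'] p.1)) hfint
    (integrableOn_mul_of_abs_le hfint measurableSet_Sq (hg.comp (hFmeas.iterate _))
      fun p hp => abs_le_toReal_supQ hS (hFQ.iterate _ hp))
    (integrableOn_mul_of_abs_le hfint measurableSet_Sq
      ((measurable_baseObservable hFmeas hg).comp ((hT.iterate m').comp measurable_fst))
      fun p _ => abs_baseObservable_le hFQ hS _)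
    (ae_of_all _ hf0) (ae_restrict_of_forall_mem measurableSet_Sq fun p hp => ?_)
  rw [Function.iterate_add_apply, ← iterate_fst_of_skew hF]
  exact abs_comp_iterate_sub_baseObservable_le hF hFQ hκ hG hL (hFQ.iterate m' hp)

theorem abs_setIntegral_mul_baseObservable_sub_le (hF : ∀ p, F p = (T p.1, G p))
    (hFQ : MapsTo F Sq Sq) (hFmeas : Measurable F) {ν : Measure ℝ}
    (hbase : BaseCorrelationDecay T ν α C₀ Λ₀) (hC₀ : 0 ≤ C₀) (hΛ₀ : 0 ≤ Λ₀)
    (hf : Measurable f) (hfint : IntegrableOn f Sq) (hg : Measurable g) (hS : supQ g ≠ ⊤)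
    (hN : norm1E α (piF f) ≠ ⊤) (m : ℕ) {m' : ℕ} (hm' : 1 ≤ m') :
    |(∫ p in Sq, f p * baseObservable F g m (T^[m'] p.1))
        - (∫ x, baseObservable F g m x ∂ν) * ∫ p in Sq, f p|
      ≤ C₀ * Λ₀ ^ m' * (supQ g).toReal * (norm1E α (piF f)).toReal := by
  have hh := measurable_baseObservable (m := m) hFmeas hg
  rw [setIntegral_Sq_mul_comp_fst (h := fun x => baseObservable F g m (T^[m'] x))
      (integrableOn_mul_of_abs_le hfint measurableSet_Sq
        (hh.comp (((measurable_of_skew hF hFmeas).iterate m').comp measurable_fst))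
        fun p _ => abs_baseObservable_le hFQ hS _),
    setIntegral_Sq_eq_integral_piF hfint]
  exact hbase.abs_le hC₀ hΛ₀ (measurable_piF hf) hN hh (abs_baseObservable_le hFQ hS) hm'

theorem abs_integral_sub_integral_baseObservable_le (hF : ∀ p, F p = (T p.1, G p))
    (hFQ : MapsTo F Sq Sq) (hFmeas : Measurable F) (hμQ : μ Sq = 1) (hinv : μ.map F = μ)
    (hκ : 0 ≤ κ)
    (hG : ∀ x ∈ J, ∀ y₁ ∈ J, ∀ y₂ ∈ J, |G (x, y₁) - G (x, y₂)| ≤ κ * |y₁ - y₂|)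
    (hg : Measurable g) (hS : supQ g ≠ ⊤) (hL : lipY g ≠ ⊤) (m : ℕ) :
    |∫ p, g p ∂μ - ∫ x, baseObservable F g m x ∂(μ.map Prod.fst)| ≤ (lipY g).toReal * κ ^ m := by
  have hh := measurable_baseObservable (m := m) hFmeas hg
  have hSq := ae_mem_Sq_of_measure_eq_one hμQ
  have hgF : ∫ p, g p ∂μ = ∫ p, g (F^[m] p) ∂μ := by
    rw [← integral_map (hFmeas.iterate m).aemeasurable hg.aestronglyMeasurable,
      (MeasurePreserving.iterate ⟨hFmeas, hinv⟩ m).map_eq]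
  rw [hgF, integral_map measurable_fst.aemeasurable hh.aestronglyMeasurable,
    ← integral_sub
      (Integrable.of_bound (f := fun p => g (F^[m] p))
        (hg.comp (hFmeas.iterate m)).aestronglyMeasurable _
        (hSq.mono fun p hp => abs_le_toReal_supQ hS (hFQ.iterate m hp)))
      (Integrable.of_bound (f := fun p => baseObservable F g m p.1)
        (hh.comp measurable_fst).aestronglyMeasurable _
        (ae_of_all _ fun p => abs_baseObservable_le hFQ hS p.1))]
  simpa using norm_integral_le_of_norm_le_const
    (f := fun p => g (F^[m] p) - baseObservable F g m p.1)
    (hSq.mono fun p hp => abs_comp_iterate_sub_baseObservable_le hF hFQ hκ hG hL hp)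

theorem abs_correlation_sub_le (hF : ∀ p, F p = (T p.1, G p)) (hFQ : MapsTo F Sq Sq)
    (hFmeas : Measurable F) (hμQ : μ Sq = 1) (hinv : μ.map F = μ)
    (hbase : BaseCorrelationDecay T (μ.map Prod.fst) α C₀ Λ₀) (hC₀ : 0 ≤ C₀) (hΛ₀ : 0 ≤ Λ₀)
    (hκ : 0 ≤ κ) (hG : ∀ x ∈ J, ∀ y₁ ∈ J, ∀ y₂ ∈ J, |G (x, y₁) - G (x, y₂)| ≤ κ * |y₁ - y₂|)
    (hf : Measurable f) (hfint : IntegrableOn f Sq) (hf0 : ∀ p, 0 ≤ f p) (hg : Measurable g)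
    (hS : supQ g ≠ ⊤) (hL : lipY g ≠ ⊤) (hN : norm1E α (piF f) ≠ ⊤) (m : ℕ) {m' : ℕ}
    (hm' : 1 ≤ m') :
    |(∫ p in Sq, f p * g (F^[m + m'] p)) - (∫ p, g p ∂μ) * ∫ p in Sq, f p|
      ≤ 2 * ((lipY g).toReal * κ ^ m) * (∫ p in Sq, f p)
        + C₀ * Λ₀ ^ m' * (supQ g).toReal * (norm1E α (piF f)).toReal := by
  set a := ∫ p in Sq, f p * g (F^[m + m'] p)
  set b := ∫ p in Sq, f p * baseObservable F g m (T^[m'] p.1)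
  set c := ∫ p, g p ∂μ
  set d := ∫ x, baseObservable F g m x ∂(μ.map Prod.fst)
  set I := ∫ p in Sq, f p
  have hI : 0 ≤ I := setIntegral_nonneg measurableSet_Sq fun p _ => hf0 p
  have hfiber : |a - b| ≤ (lipY g).toReal * κ ^ m * I :=
    abs_setIntegral_mul_comp_iterate_sub_baseObservable_le hF hFQ hFmeas hκ hG hfint hf0 hg hS hL
      m m'
  have hdecay : |b - d * I| ≤ C₀ * Λ₀ ^ m' * (supQ g).toReal * (norm1E α (piF f)).toReal :=
    abs_setIntegral_mul_baseObservable_sub_le hF hFQ hFmeas hbase hC₀ hΛ₀ hf hfint hg hS hN m hm'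
  have hmean : |(d - c) * I| ≤ (lipY g).toReal * κ ^ m * I := by
    rw [abs_mul, abs_of_nonneg hI, abs_sub_comm]
    exact mul_le_mul_of_nonneg_right
      (abs_integral_sub_integral_baseObservable_le hF hFQ hFmeas hμQ hinv hκ hG hg hS hL m) hI
  calc |a - c * I| ≤ |a - b| + (|b - d * I| + |d * I - c * I|) :=
        (abs_sub_le _ _ _).trans (add_le_add_right (abs_sub_le _ _ _) _)
    _ ≤ _ := by rw [← sub_mul]; linarith

theorem eq_zero_of_yLipNorm_eq_zero (hg0 : yLipNorm g = 0) {p : ℝ × ℝ} (hp : p ∈ Sq) :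
    g p = 0 := by
  have hS : supQ g = 0 := (add_eq_zero.mp hg0).1
  have hgp := abs_le_toReal_supQ (by rw [hS]; exact ENNReal.zero_ne_top) hp
  rw [hS, ENNReal.toReal_zero] at hgp
  exact abs_nonpos_iff.mp hgp

theorem correlation_eq_zero_of_yLipNorm_eq_zero (hFQ : MapsTo F Sq Sq) (hμQ : μ Sq = 1)
    (hg0 : yLipNorm g = 0) (n : ℕ) :
    (∫ p in Sq, f p * g (F^[n] p)) - (∫ p, g p ∂μ) * ∫ p in Sq, f p = 0 := by
  have hμg : ∫ p, g p ∂μ = 0 := integral_eq_zero_of_ae <|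
    (ae_mem_Sq_of_measure_eq_one hμQ).mono fun p hp => eq_zero_of_yLipNorm_eq_zero hg0 hp
  rw [setIntegral_eq_zero_of_forall_eq_zero fun p hp => by
    rw [eq_zero_of_yLipNorm_eq_zero hg0 (hFQ.iterate n hp), mul_zero], hμg, zero_mul, sub_zero]

theorem ofReal_abs_correlation_sub_le (hF : ∀ p, F p = (T p.1, G p)) (hFQ : MapsTo F Sq Sq)
    (hFmeas : Measurable F) (hμQ : μ Sq = 1) (hinv : μ.map F = μ)
    (hbase : BaseCorrelationDecay T (μ.map Prod.fst) α C₀ Λ₀) (hC₀ : 0 ≤ C₀) (hΛ₀ : 0 ≤ Λ₀)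
    (hκ : 0 ≤ κ) (hG : ∀ x ∈ J, ∀ y₁ ∈ J, ∀ y₂ ∈ J, |G (x, y₁) - G (x, y₂)| ≤ κ * |y₁ - y₂|)
    (hf : Measurable f) (hfint : IntegrableOn f Sq) (hf0 : ∀ p, 0 ≤ f p) (hg : Measurable g)
    (hgfin : yLipNorm g < ⊤) {Λ : ℝ} (hΛ : 0 < Λ) {n : ℕ} (hn : 1 ≤ n)
    (hκn : κ ^ (n / 2) ≤ 2 * Λ ^ n) (hΛ₀n : Λ₀ ^ ((n + 1) / 2) ≤ 2 * Λ ^ n) :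
    ENNReal.ofReal |(∫ p in Sq, f p * g (F^[n] p)) - (∫ p, g p ∂μ) * ∫ p in Sq, f p|
      ≤ ENNReal.ofReal (2 * (2 + C₀) * Λ ^ n) * yLipNorm g *
          (norm1E α (piF f) + ∫⁻ p in Sq, ENNReal.ofReal |f p|) := by
  obtain ⟨hS, hL⟩ := ENNReal.add_lt_top.mp hgfin
  rcases eq_or_ne (yLipNorm g) 0 with hg0 | hg0
  · simp [correlation_eq_zero_of_yLipNorm_eq_zero hFQ hμQ hg0]
  rcases eq_or_ne (norm1E α (piF f)) ⊤ with hN | hN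
  · rw [hN, top_add, ENNReal.mul_top (mul_ne_zero (ENNReal.ofReal_pos.mpr (by positivity)).ne' hg0)]
    exact le_top
  have hlin : ∫⁻ p in Sq, ENNReal.ofReal |f p| = ENNReal.ofReal (∫ p in Sq, f p) := by
    simp_rw [abs_of_nonneg (hf0 _)]
    exact (ofReal_integral_eq_lintegral_ofReal hfint (ae_of_all _ hf0)).symm
  have hI : 0 ≤ ∫ p in Sq, f p := setIntegral_nonneg measurableSet_Sq fun p _ => hf0 p
  have hcorr := abs_correlation_sub_le hF hFQ hFmeas hμQ hinv hbase hC₀ hΛ₀ hκ hG hf hfint hf0 hg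
    hS.ne hL.ne hN (n / 2) (m' := (n + 1) / 2) (by omega)
  rw [show n / 2 + (n + 1) / 2 = n by omega] at hcorr
  rw [hlin]
  refine ofReal_le_ofReal_mul_mul_of_le (by positivity) hgfin.ne (by finiteness) (hcorr.trans ?_)
  rw [yLipNorm, ENNReal.toReal_add hS.ne hL.ne, ENNReal.toReal_add hN ENNReal.ofReal_ne_top,
    ENNReal.toReal_ofReal hI]
  set S := (supQ g).toReal
  set L := (lipY g).toReal
  set N := (norm1E α (piF f)).toReal
  set I := ∫ p in Sq, f p
  have hc : 0 ≤ Λ ^ n := by positivity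
  have hS0 : 0 ≤ S := ENNReal.toReal_nonneg
  have hL0 : 0 ≤ L := ENNReal.toReal_nonneg
  have hN0 : 0 ≤ N := ENNReal.toReal_nonneg
  have hLI : L * I ≤ (S + L) * (N + I) := by gcongr <;> linarith
  have hSN : S * N ≤ (S + L) * (N + I) := by gcongr <;> linarith
  calc 2 * (L * κ ^ (n / 2)) * I + C₀ * Λ₀ ^ ((n + 1) / 2) * S * N
      ≤ 2 * (L * (2 * Λ ^ n)) * I + C₀ * (2 * Λ ^ n) * S * N := by gcongr
    _ ≤ 2 * (2 + C₀) * Λ ^ n * (S + L) * (N + I) := by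
      nlinarith [mul_le_mul_of_nonneg_left hLI hc,
        mul_le_mul_of_nonneg_left hSN (mul_nonneg hC₀ hc)]

end Correlation

theorem skew_product_convergence_to_equilibrium_general
    (T : ℝ → ℝ) (G : ℝ × ℝ → ℝ) (F : ℝ × ℝ → ℝ × ℝ)
    (hF : ∀ p, F p = (T p.1, G p)) (hFQ : Set.MapsTo F Sq Sq) (hFmeas : Measurable F)
    (μ : Measure (ℝ × ℝ)) [IsProbabilityMeasure μ] (hμQ : μ Sq = 1)
    (hinv : μ.map F = μ)
    (α : ℝ)
    -- (1) exponential convergence to equilibrium of the base map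
    (h1 : ∃ C₀ > (0 : ℝ), ∃ Λ₀ ∈ Set.Ioo (0 : ℝ) 1, ∀ f g : ℝ → ℝ, ∀ Kg : ℝ,
      Measurable f → Var1 α f < ⊤ → Measurable g → (∀ x, |g x| ≤ Kg) →
      ∀ n : ℕ, 1 ≤ n →
        ENNReal.ofReal |(∫ x in J, f x * g (T^[n] x)) -
            (∫ x, g x ∂(μ.map Prod.fst)) * ∫ x in J, f x|
          ≤ ENNReal.ofReal (C₀ * Λ₀ ^ n * Kg) * norm1E α f)
    -- (3) uniform contraction on vertical leaves
    (lam : ℝ) (hlam : lam < 1)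
    (h3 : ∀ x ∈ J, ∀ y₁ ∈ J, ∀ y₂ ∈ J, |G (x, y₁) - G (x, y₂)| ≤ lam * |y₁ - y₂|) :
    ∃ C > (0 : ℝ), ∃ Λ ∈ Set.Ioo (0 : ℝ) 1, ∀ f g : ℝ × ℝ → ℝ,
      Measurable f → IntegrableOn f Sq volume → (∀ p, 0 ≤ f p) →
      Measurable g → yLipNorm g < ⊤ →
      ∀ n : ℕ, 1 ≤ n →
        ENNReal.ofReal |(∫ p in Sq, f p * g (F^[n] p)) -
            (∫ p, g p ∂μ) * ∫ p in Sq, f p|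
          ≤ ENNReal.ofReal (C * Λ ^ n) * yLipNorm g *
              (norm1E α (piF f) + ∫⁻ p in Sq, ENNReal.ofReal |f p|) := by
  obtain ⟨C₀, hC₀, Λ₀, hΛ₀, hbase⟩ := h1
  have hG : ∀ x ∈ J, ∀ y₁ ∈ J, ∀ y₂ ∈ J, |G (x, y₁) - G (x, y₂)| ≤ max lam 0 * |y₁ - y₂| :=
    fun x hx y₁ hy₁ y₂ hy₂ => (h3 x hx y₁ hy₁ y₂ hy₂).trans (by gcongr; exact le_max_left _ _)
  obtain ⟨Λ, hΛhalf, hΛ1, hκΛ, hΛ₀Λ⟩ := exists_half_le_lt_one_le_sq (max_lt hlam one_pos) hΛ₀.2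
  refine ⟨2 * (2 + C₀), by positivity, Λ, ⟨by linarith, hΛ1⟩, ?_⟩
  intro f g hf hfint hf0 hg hgfin n hn
  exact ofReal_abs_correlation_sub_le hF hFQ hFmeas hμQ hinv hbase hC₀.le hΛ₀.1.le
    (le_max_right _ _) hG hf hfint hf0 hg hgfin (by linarith) hn
    (pow_le_two_mul_pow (le_max_right _ _) hκΛ hΛhalf hΛ1.le (by omega))
    (pow_le_two_mul_pow hΛ₀.1.le hΛ₀Λ hΛhalf hΛ1.le (by omega))

/-- Skew products `F(x,y) = (T(x), G(x,y))` with contracting fibers over a base `T` with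
exponential convergence to equilibrium have exponential convergence to equilibrium. -/
theorem skew_product_convergence_to_equilibrium
    (T : ℝ → ℝ) (G : ℝ × ℝ → ℝ) (F : ℝ × ℝ → ℝ × ℝ)
    (hF : ∀ p, F p = (T p.1, G p)) (hFQ : Set.MapsTo F Sq Sq) (hFmeas : Measurable F)
    (μ : Measure (ℝ × ℝ)) [IsProbabilityMeasure μ] (hμQ : μ Sq = 1)
    (hinv : μ.map F = μ)
    (hTinv : (μ.map Prod.fst).map T = μ.map Prod.fst)
    (hac : μ.map Prod.fst ≪ volume)
    (α : ℝ) (hα : α ∈ Set.Ioc (0 : ℝ) 1)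
    -- (1) exponential convergence to equilibrium of the base map
    (h1 : ∃ C₀ > (0 : ℝ), ∃ Λ₀ ∈ Set.Ioo (0 : ℝ) 1, ∀ f g : ℝ → ℝ, ∀ Kg : ℝ,
      Measurable f → Var1 α f < ⊤ → Measurable g → (∀ x, |g x| ≤ Kg) →
      ∀ n : ℕ, 1 ≤ n →
        ENNReal.ofReal |(∫ x in J, f x * g (T^[n] x)) -
            (∫ x, g x ∂(μ.map Prod.fst)) * ∫ x in J, f x|
          ≤ ENNReal.ofReal (C₀ * Λ₀ ^ n * Kg) * norm1E α f)
    -- (2) nonsingularity and piecewise monotonicity of the base map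
    (h2a : ∀ A : Set ℝ, MeasurableSet A → volume A = 0 → volume (T ⁻¹' A ∩ J) = 0)
    (h2b : ∃ (k : ℕ) (a b : Fin k → ℝ),
      (⋃ i, Set.Icc (a i) (b i)) = J ∧
      ∀ i, ContinuousOn T (Set.Icc (a i) (b i)) ∧ Set.InjOn T (Set.Icc (a i) (b i)))
    -- (3) uniform contraction on vertical leaves
    (lam : ℝ) (hlam : lam < 1)
    (h3 : ∀ x ∈ J, ∀ y₁ ∈ J, ∀ y₂ ∈ J, |G (x, y₁) - G (x, y₂)| ≤ lam * |y₁ - y₂|) :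
    ∃ C > (0 : ℝ), ∃ Λ ∈ Set.Ioo (0 : ℝ) 1, ∀ f g : ℝ × ℝ → ℝ,
      Measurable f → IntegrableOn f Sq volume → (∀ p, 0 ≤ f p) →
      Measurable g → yLipNorm g < ⊤ →
      ∀ n : ℕ, 1 ≤ n →
        ENNReal.ofReal |(∫ p in Sq, f p * g (F^[n] p)) -
            (∫ p, g p ∂μ) * ∫ p in Sq, f p|
          ≤ ENNReal.ofReal (C * Λ ^ n) * yLipNorm g *
              (norm1E α (piF f) + ∫⁻ p in Sq, ENNReal.ofReal |f p|) :=
  skew_product_convergence_to_equilibrium_general T G F hF hFQ hFmeas μ hμQ hinv α h1 lam hlam h3
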